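/- Let c₁, c₂ be nonzero complex numbers and let a₁, a₂ ∈ ℂ with |a₁| = |a₂| = 1 and a₁ ≠ a₂. Then the sequence (c₁ a₁ⁿ + c₂ a₂ⁿ)_{n∈ℕ} does not converge to 0 as n → ∞. -/

import Mathlib

open MeasureTheory Filter Bornology
open scoped ENNReal

/-- The (quasi-)norm of the Fock space `F^p`, valued in `ℝ≥0∞`. -/
noncomputable def fockNorm (p : ℝ) (f : ℂ → ℂ) : ℝ≥0∞ :=
  (ENNReal.ofReal (p / (2 * Real.pi)) *
    ∫⁻ z : ℂ, ENNReal.ofReal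
      (‖f z‖ ^ p * Real.exp (-(p * ‖z‖ ^ 2) / 2))) ^ (1 / p)

/-- Membership in the Fock space `F^p`: entire with finite Fock norm. -/
def MemFock (p : ℝ) (f : ℂ → ℂ) : Prop :=
  Differentiable ℂ f ∧ fockNorm p f < ⊤

/-- `T` is bounded from `F^p` to `F^q`. -/
def FockBounded (p q : ℝ) (T : (ℂ → ℂ) → ℂ → ℂ) : Prop :=
  ∃ C : ℝ, 0 ≤ C ∧ ∀ f : ℂ → ℂ, MemFock p f →
    MemFock q (T f) ∧ fockNorm q (T f) ≤ ENNReal.ofReal C * fockNorm p f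

/-- `T` is compact from `F^p` to `F^q`. -/
def FockCompact (p q : ℝ) (T : (ℂ → ℂ) → ℂ → ℂ) : Prop :=
  FockBounded p q T ∧
    ∀ f : ℕ → ℂ → ℂ, (∀ n, MemFock p (f n) ∧ fockNorm p (f n) ≤ 1) →
      ∃ φ : ℕ → ℕ, StrictMono φ ∧ ∃ g : ℂ → ℂ, MemFock q g ∧
        Tendsto (fun k => fockNorm q (fun z => T (f (φ k)) z - g z)) atTop (nhds 0)

/-- The quantity `m_z(ψ, φ) = |ψ(z)| e^{(|φ(z)|² - |z|²)/2}`. -/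
noncomputable def mz (ψ φ : ℂ → ℂ) (z : ℂ) : ℝ :=
  ‖ψ z‖ * Real.exp ((‖φ z‖ ^ 2 - ‖z‖ ^ 2) / 2)

/-- `ρ(w₁, w₂) = |w₁ - w₂|² / (2(2 + |w₁ - w₂|²))`. -/
noncomputable def rho (w₁ w₂ : ℂ) : ℝ :=
  ‖w₁ - w₂‖ ^ 2 / (2 * (2 + ‖w₁ - w₂‖ ^ 2))

/-- The kernel `K_w(z) = e^{\overline{w} z}`. -/
noncomputable def Kfun (w : ℂ) : ℂ → ℂ :=
  fun z => Complex.exp (starRingEnd ℂ w * z)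

/-- The normalized kernel `k_w(z) = e^{\overline{w} z - |w|²/2}`. -/
noncomputable def kfun (w : ℂ) : ℂ → ℂ :=
  fun z => Complex.exp (starRingEnd ℂ w * z - ((‖w‖ : ℝ) : ℂ) ^ 2 / 2)

/-- The essential norm of `L : F^p → F^q`. -/
noncomputable def essNorm (p q : ℝ) (L : (ℂ → ℂ) → ℂ → ℂ) : ℝ≥0∞ :=
  sInf { s : ℝ≥0∞ | ∃ K : (ℂ → ℂ) → ℂ → ℂ, IsLinearMap ℂ K ∧ FockCompact p q K ∧
    s = ⨆ f : {f : ℂ → ℂ // MemFock p f ∧ fockNorm p f ≤ 1},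
          fockNorm q (fun z => L f.1 z - K f.1 z) }

open Topology

theorem Filter.Tendsto.mul_sub_succ {R : Type*} [Ring R] [TopologicalSpace R]
    [IsTopologicalRing R] {s : ℕ → R} (hs : Tendsto s atTop (𝓝 0)) (a : R) :
    Tendsto (fun n => a * s n - s (n + 1)) atTop (𝓝 0) := by
  simpa using (hs.const_mul a).sub (hs.comp (tendsto_add_atTop_nat 1))

theorem not_tendsto_mul_pow_zero {K : Type*} [NormedDivisionRing K] {c a : K}
    (hc : c ≠ 0) (ha : ‖a‖ = 1) :
    ¬ Tendsto (fun n : ℕ => c * a ^ n) atTop (𝓝 0) := by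
  intro h
  have h_norm : Tendsto (fun _ : ℕ => ‖c‖) atTop (𝓝 0) := by
    simpa only [norm_mul, norm_pow, ha, one_pow, mul_one, norm_zero] using h.norm
  exact hc (norm_eq_zero.mp (tendsto_const_nhds_iff.mp h_norm))

theorem not_tendsto_zero_general (c₁ c₂ a₁ a₂ : ℂ) (hc₁ : c₁ ≠ 0)
    (ha₁ : ‖a₁‖ = 1) (hne : a₁ ≠ a₂) :
    ¬ Filter.Tendsto (fun n : ℕ => c₁ * a₁ ^ n + c₂ * a₂ ^ n) Filter.atTop (nhds 0) := by
  intro h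
  -- Multiplying by `a₂` and subtracting the shifted sequence eliminates the `a₂ⁿ` term.
  have h_elim : (fun n => a₂ * (c₁ * a₁ ^ n + c₂ * a₂ ^ n)
      - (c₁ * a₁ ^ (n + 1) + c₂ * a₂ ^ (n + 1))) = fun n => c₁ * (a₂ - a₁) * a₁ ^ n := by
    funext n
    ring
  have hc : c₁ * (a₂ - a₁) ≠ 0 := mul_ne_zero hc₁ (sub_ne_zero.mpr hne.symm)
  exact not_tendsto_mul_pow_zero hc ha₁ (h_elim ▸ h.mul_sub_succ a₂)

/-- If `c₁, c₂ ≠ 0`, `|a₁| = |a₂| = 1` and `a₁ ≠ a₂`, then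
`c₁ a₁ⁿ + c₂ a₂ⁿ` does not converge to `0`. -/
theorem not_tendsto_zero (c₁ c₂ a₁ a₂ : ℂ) (hc₁ : c₁ ≠ 0) (hc₂ : c₂ ≠ 0)
    (ha₁ : ‖a₁‖ = 1) (ha₂ : ‖a₂‖ = 1) (hne : a₁ ≠ a₂) :
    ¬ Filter.Tendsto (fun n : ℕ => c₁ * a₁ ^ n + c₂ * a₂ ^ n) Filter.atTop (nhds 0) :=
  not_tendsto_zero_general c₁ c₂ a₁ a₂ hc₁ ha₁ hne
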